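/- arXiv:1407.3089 — 2 statements merged into one kernel-verified Lean document; each statement's English description precedes it below -/
import Mathlib

section
/- Suppose Y is independently marked and second-order intensity-reweighted stationary. Then for any Borel mark sets C, D with ν(C), ν(D) > 0, the inhomogeneous cross K-function equals the inhomogeneous K-function of the ground process: K_inhom^{CD}(r) = ∫_{B(0,r)} g_g(0, z) dz, independent of C and D. -/
open MeasureTheory

/-! Under independent marking the mark densities `f z₁ m₁ f z₂ m₂` appear in both the two-point
density and the product of intensities, so they cancel and the marked pair correlation function
`g((z₁, m₁), (z₂, m₂))` is the ground one `g_g(z₁, z₂)`. The integrand of the cross `K`-function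
therefore does not depend on the marks: integrating over `D` and `C` only contributes the factors
`ν(D)` and `ν(C)`, which the normalisation removes. -/

theorem pairCorrelation_eq_ground_of_independentMarking {X M : Type*}
    {f : X → M → ℝ} {lamg : X → ℝ} {ρ2 : X × M → X × M → ℝ} {ρ2g : X → X → ℝ}
    {lam : X × M → ℝ} {g : X × M → X × M → ℝ} {gg : X → X → ℝ}
    (hlam : ∀ z m, lam (z, m) = f z m * lamg z) (hf : ∀ z m, f z m ≠ 0)
    (hρ2 : ∀ z₁ m₁ z₂ m₂, ρ2 (z₁, m₁) (z₂, m₂) = f z₁ m₁ * f z₂ m₂ * ρ2g z₁ z₂)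
    (hg : ∀ p q, g p q = ρ2 p q / (lam p * lam q))
    (hgg : ∀ z₁ z₂, gg z₁ z₂ = ρ2g z₁ z₂ / (lamg z₁ * lamg z₂)) (p q : X × M) :
    g p q = gg p.1 q.1 := by
  obtain ⟨z₁, m₁⟩ := p
  obtain ⟨z₂, m₂⟩ := q
  rw [hg, hρ2, hlam, hlam, hgg,
    show f z₁ m₁ * lamg z₁ * (f z₂ m₂ * lamg z₂) = f z₁ m₁ * f z₂ m₂ * (lamg z₁ * lamg z₂) by ring,
    mul_div_mul_left _ _ (mul_ne_zero (hf z₁ m₁) (hf z₂ m₂))]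

theorem setIntegral_prod_fun_fst {α β E : Type*} [MeasurableSpace α] [MeasurableSpace β]
    [NormedAddCommGroup E] [NormedSpace ℝ E] (μ : Measure α) (ν : Measure β) [SFinite μ] [SFinite ν]
    (F : α → E) (s : Set α) (t : Set β) :
    ∫ z in s ×ˢ t, F z.1 ∂μ.prod ν = ν.real t • ∫ x in s, F x ∂μ := by
  rw [← Measure.prod_restrict, integral_fun_fst, measureReal_restrict_apply_univ]

theorem stmt_9_general {d : ℕ} {M : Type*} [MeasurableSpace M]
    (ν : Measure M) [IsFiniteMeasure ν]
    (f : EuclideanSpace ℝ (Fin d) → M → ℝ) (lamg : EuclideanSpace ℝ (Fin d) → ℝ)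
    (ρ2 : (EuclideanSpace ℝ (Fin d) × M) → (EuclideanSpace ℝ (Fin d) × M) → ℝ)
    (ρ2g : EuclideanSpace ℝ (Fin d) → EuclideanSpace ℝ (Fin d) → ℝ)
    (lam : EuclideanSpace ℝ (Fin d) × M → ℝ)
    (g : (EuclideanSpace ℝ (Fin d) × M) → (EuclideanSpace ℝ (Fin d) × M) → ℝ)
    (gg : EuclideanSpace ℝ (Fin d) → EuclideanSpace ℝ (Fin d) → ℝ)
    -- intensity decomposition and nondegeneracy
    (hlam : ∀ z m, lam (z, m) = f z m * lamg z)
    (hf : ∀ z m, f z m ≠ 0)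
    -- independent marking: the two-point mark density factorizes
    (hρ2 : ∀ z₁ m₁ z₂ m₂, ρ2 (z₁, m₁) (z₂, m₂) = f z₁ m₁ * f z₂ m₂ * ρ2g z₁ z₂)
    -- pair correlation functions
    (hg : ∀ p q, g p q = ρ2 p q / (lam p * lam q))
    (hgg : ∀ z₁ z₂, gg z₁ z₂ = ρ2g z₁ z₂ / (lamg z₁ * lamg z₂))
    (C D : Set M)
    (hC : 0 < ν C) (hD : 0 < ν D) (r : ℝ) :
    (1 / ((ν C).toReal * (ν D).toReal)) *
      ∫ m₁ in C,
        (∫ p in Metric.closedBall (0 : EuclideanSpace ℝ (Fin d)) r ×ˢ D,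
          g ((0 : EuclideanSpace ℝ (Fin d)), m₁) p
            ∂((volume : Measure (EuclideanSpace ℝ (Fin d))).prod ν)) ∂ν =
      ∫ z in Metric.closedBall (0 : EuclideanSpace ℝ (Fin d)) r,
        gg (0 : EuclideanSpace ℝ (Fin d)) z := by
  have hCpos : (ν C).toReal ≠ 0 := (ENNReal.toReal_pos hC.ne' (measure_ne_top ν C)).ne'
  have hDpos : (ν D).toReal ≠ 0 := (ENNReal.toReal_pos hD.ne' (measure_ne_top ν D)).ne'
  simp_rw [pairCorrelation_eq_ground_of_independentMarking hlam hf hρ2 hg hgg,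
    setIntegral_prod_fun_fst, setIntegral_const, smul_eq_mul, Measure.real]
  field_simp

/-- Independently marked SOIRS processes: the inhomogeneous cross `K`-function
`K_inhom^{CD}(r) = (1/(ν(C)ν(D))) ∫_C ∫_{B(0,r)×D} g((0,m₁),(z,m₂)) dν(m₁) dz dν(m₂)`
equals `∫_{B(0,r)} g_g(0,z) dz`, the inhomogeneous `K`-function of the ground process,
independently of the mark sets `C` and `D`. -/
theorem stmt_9 {d : ℕ} {M : Type*} [MeasurableSpace M]
    (ν : Measure M) [IsFiniteMeasure ν]
    (f : EuclideanSpace ℝ (Fin d) → M → ℝ) (lamg : EuclideanSpace ℝ (Fin d) → ℝ)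
    (ρ2 : (EuclideanSpace ℝ (Fin d) × M) → (EuclideanSpace ℝ (Fin d) × M) → ℝ)
    (ρ2g : EuclideanSpace ℝ (Fin d) → EuclideanSpace ℝ (Fin d) → ℝ)
    (lam : EuclideanSpace ℝ (Fin d) × M → ℝ)
    (g : (EuclideanSpace ℝ (Fin d) × M) → (EuclideanSpace ℝ (Fin d) × M) → ℝ)
    (gg : EuclideanSpace ℝ (Fin d) → EuclideanSpace ℝ (Fin d) → ℝ)
    -- intensity decomposition and nondegeneracy
    (hlam : ∀ z m, lam (z, m) = f z m * lamg z)
    (hf : ∀ z m, f z m ≠ 0) (hlamg : ∀ z, lamg z ≠ 0)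
    -- independent marking: the two-point mark density factorizes
    (hρ2 : ∀ z₁ m₁ z₂ m₂, ρ2 (z₁, m₁) (z₂, m₂) = f z₁ m₁ * f z₂ m₂ * ρ2g z₁ z₂)
    -- pair correlation functions
    (hg : ∀ p q, g p q = ρ2 p q / (lam p * lam q))
    (hgg : ∀ z₁ z₂, gg z₁ z₂ = ρ2g z₁ z₂ / (lamg z₁ * lamg z₂))
    -- SOIRS: the ground pair correlation function is translation invariant
    (hTI : ∀ a z₁ z₂, gg (z₁ + a) (z₂ + a) = gg z₁ z₂)
    (C D : Set M) (hCm : MeasurableSet C) (hDm : MeasurableSet D)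
    (hC : 0 < ν C) (hD : 0 < ν D) (r : ℝ) :
    (1 / ((ν C).toReal * (ν D).toReal)) *
      ∫ m₁ in C,
        (∫ p in Metric.closedBall (0 : EuclideanSpace ℝ (Fin d)) r ×ˢ D,
          g ((0 : EuclideanSpace ℝ (Fin d)), m₁) p
            ∂((volume : Measure (EuclideanSpace ℝ (Fin d))).prod ν)) ∂ν =
      ∫ z in Metric.closedBall (0 : EuclideanSpace ℝ (Fin d)) r,
        gg (0 : EuclideanSpace ℝ (Fin d)) z :=
  stmt_9_general ν f lamg ρ2 ρ2g lam g gg hlam hf hρ2 hg hgg C D hC hD r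
end

section
/- Let C ⊂ M be a Borel mark set with 0 < ν(C) < ν(M), let D = M ∖ C, and suppose Y is SOIRS with Y_C and Y_D independent. Then the pair correlation function satisfies g((0,m_1),(z,m_2)) = 1 for m_1 ∈ C, m_2 ∈ D (and symmetrically), and consequently K_inhom^{CM}(r) = (ν(D)/ν(M)) ω_d r^d + (ν(C)/ν(M)) K_inhom^{CC}(r), where ω_d r^d = ℓ(B(0,r)). -/
open MeasureTheory

/-! Across the two independent components the two-point density factorizes, so the pair
correlation function is `1` there. Splitting the mark space of the inner integral of
`K^{CM}` into `C` and `D = Cᶜ`, the `D`-part is therefore the measure `ℓ(B(0,r)) ν(D)` of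
`B(0,r) × D`, while the `C`-part is the integrand of `K^{CC}`; normalizing gives the
mixture formula. -/

lemma setIntegral_prod_univ_eq_add_of_eq_one_on_compl {X M : Type*} [MeasurableSpace X]
    [MeasurableSpace M] {μ : Measure X} {ν : Measure M} [SFinite ν] {s : Set X} {C : Set M}
    (hs : MeasurableSet s) (hC : MeasurableSet C) {f : X × M → ℝ}
    (hf : IntegrableOn f (s ×ˢ Set.univ) (μ.prod ν)) (hf_one : ∀ p ∈ s ×ˢ Cᶜ, f p = 1) :
    ∫ p in s ×ˢ Set.univ, f p ∂(μ.prod ν) =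
      ∫ p in s ×ˢ C, f p ∂(μ.prod ν) + (μ s).toReal * (ν Cᶜ).toReal := by
  have hdisj : Disjoint (s ×ˢ C) (s ×ˢ Cᶜ) :=
    Set.disjoint_prod.2 (Or.inr disjoint_compl_right)
  rw [← Set.union_compl_self C, Set.prod_union,
    setIntegral_union hdisj (hs.prod hC.compl) (hf.mono_set (by gcongr; simp))
      (hf.mono_set (by gcongr; simp)),
    setIntegral_congr_fun (hs.prod hC.compl) hf_one, setIntegral_const, smul_eq_mul, mul_one,
    measureReal_def, Measure.prod_prod, ENNReal.toReal_mul]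

theorem stmt_11_general {d : ℕ} {M : Type*} [MeasurableSpace M]
    (ν : Measure M) [IsFiniteMeasure ν]
    (ρ2 : (EuclideanSpace ℝ (Fin d) × M) → (EuclideanSpace ℝ (Fin d) × M) → ℝ)
    (lam : EuclideanSpace ℝ (Fin d) × M → ℝ) (hlam : ∀ p, lam p ≠ 0)
    (g : (EuclideanSpace ℝ (Fin d) × M) → (EuclideanSpace ℝ (Fin d) × M) → ℝ)
    (hg : ∀ p q, g p q = ρ2 p q / (lam p * lam q))
    (C : Set M) (hCm : MeasurableSet C) (hC : 0 < ν C)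
    -- independence of `Y_C` and `Y_D`: the two-point density factorizes across `C` and `Cᶜ`
    (hFact : ∀ z₁ m₁ z₂ m₂, (m₁ ∈ C ∧ m₂ ∈ Cᶜ) ∨ (m₁ ∈ Cᶜ ∧ m₂ ∈ C) →
      ρ2 (z₁, m₁) (z₂, m₂) = lam (z₁, m₁) * lam (z₂, m₂))
    (r : ℝ)
    -- integrability regularity
    (hInt : ∀ m₁ ∈ C, IntegrableOn (fun p => g ((0 : EuclideanSpace ℝ (Fin d)), m₁) p)
      (Metric.closedBall (0 : EuclideanSpace ℝ (Fin d)) r ×ˢ (Set.univ : Set M))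
      ((volume : Measure (EuclideanSpace ℝ (Fin d))).prod ν))
    (hIntC : IntegrableOn (fun m₁ =>
      ∫ p in Metric.closedBall (0 : EuclideanSpace ℝ (Fin d)) r ×ˢ C,
        g ((0 : EuclideanSpace ℝ (Fin d)), m₁) p
          ∂((volume : Measure (EuclideanSpace ℝ (Fin d))).prod ν)) C ν) :
    (∀ (z : EuclideanSpace ℝ (Fin d)) m₁ m₂, m₁ ∈ C → m₂ ∈ Cᶜ →
        g ((0 : EuclideanSpace ℝ (Fin d)), m₁) (z, m₂) = 1) ∧
    (1 / ((ν C).toReal * (ν (Set.univ : Set M)).toReal)) *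
        ∫ m₁ in C,
          (∫ p in Metric.closedBall (0 : EuclideanSpace ℝ (Fin d)) r ×ˢ (Set.univ : Set M),
            g ((0 : EuclideanSpace ℝ (Fin d)), m₁) p
              ∂((volume : Measure (EuclideanSpace ℝ (Fin d))).prod ν)) ∂ν =
      ((ν Cᶜ).toReal / (ν (Set.univ : Set M)).toReal) *
          (volume (Metric.closedBall (0 : EuclideanSpace ℝ (Fin d)) r)).toReal +
        ((ν C).toReal / (ν (Set.univ : Set M)).toReal) *
          ((1 / ((ν C).toReal * (ν C).toReal)) *
            ∫ m₁ in C,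
              (∫ p in Metric.closedBall (0 : EuclideanSpace ℝ (Fin d)) r ×ˢ C,
                g ((0 : EuclideanSpace ℝ (Fin d)), m₁) p
                  ∂((volume : Measure (EuclideanSpace ℝ (Fin d))).prod ν)) ∂ν) := by
  have hone : ∀ (z : EuclideanSpace ℝ (Fin d)) m₁ m₂, m₁ ∈ C → m₂ ∈ Cᶜ →
      g (0, m₁) (z, m₂) = 1 := fun z m₁ m₂ h₁ h₂ => by
    rw [hg, hFact 0 m₁ z m₂ (Or.inl ⟨h₁, h₂⟩), div_self (mul_ne_zero (hlam _) (hlam _))]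
  refine ⟨hone, ?_⟩
  have hsplit : ∀ m₁ ∈ C,
      ∫ p in Metric.closedBall 0 r ×ˢ Set.univ, g (0, m₁) p ∂(volume.prod ν) =
        ∫ p in Metric.closedBall 0 r ×ˢ C, g (0, m₁) p ∂(volume.prod ν) +
          (volume (Metric.closedBall (0 : EuclideanSpace ℝ (Fin d)) r)).toReal * (ν Cᶜ).toReal :=
    fun m₁ hm₁ => setIntegral_prod_univ_eq_add_of_eq_one_on_compl measurableSet_closedBall hCm
      (hInt m₁ hm₁) fun p hp => hone p.1 m₁ p.2 hm₁ hp.2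
  rw [setIntegral_congr_fun hCm hsplit,
    integral_add hIntC (integrableOn_const (measure_ne_top ν C)), setIntegral_const,
    smul_eq_mul, ← measureReal_def]
  have hCpos : 0 < ν.real C := ENNReal.toReal_pos hC.ne' (measure_ne_top ν C)
  have hMpos : 0 < ν.real Set.univ :=
    hCpos.trans_le (measureReal_mono (Set.subset_univ C))
  simp only [← measureReal_def]
  field_simp
  ring

/-- Mixture formula for the inhomogeneous `K`-function: if `Y` is SOIRS and `Y_C`, `Y_D`
(`D = M∖C`) are independent, then `g((0,m₁),(z,m₂)) = 1` for `m₁ ∈ C`, `m₂ ∈ D` (and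
symmetrically) and `K_inhom^{CM}(r) = (ν(D)/ν(M)) ℓ(B(0,r)) + (ν(C)/ν(M)) K_inhom^{CC}(r)`. -/
theorem stmt_11 {d : ℕ} {M : Type*} [MeasurableSpace M]
    (ν : Measure M) [IsFiniteMeasure ν]
    (ρ2 : (EuclideanSpace ℝ (Fin d) × M) → (EuclideanSpace ℝ (Fin d) × M) → ℝ)
    (lam : EuclideanSpace ℝ (Fin d) × M → ℝ) (hlam : ∀ p, lam p ≠ 0)
    (g : (EuclideanSpace ℝ (Fin d) × M) → (EuclideanSpace ℝ (Fin d) × M) → ℝ)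
    (hg : ∀ p q, g p q = ρ2 p q / (lam p * lam q))
    -- SOIRS: translation invariance of `g` in the spatial coordinate
    (hTI : ∀ a z₁ m₁ z₂ m₂, g (z₁ + a, m₁) (z₂ + a, m₂) = g (z₁, m₁) (z₂, m₂))
    (C : Set M) (hCm : MeasurableSet C) (hC : 0 < ν C) (hCc : 0 < ν Cᶜ)
    -- independence of `Y_C` and `Y_D`: the two-point density factorizes across `C` and `Cᶜ`
    (hFact : ∀ z₁ m₁ z₂ m₂, (m₁ ∈ C ∧ m₂ ∈ Cᶜ) ∨ (m₁ ∈ Cᶜ ∧ m₂ ∈ C) →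
      ρ2 (z₁, m₁) (z₂, m₂) = lam (z₁, m₁) * lam (z₂, m₂))
    (r : ℝ) (hr : 0 ≤ r)
    -- integrability regularity
    (hInt : ∀ m₁ ∈ C, IntegrableOn (fun p => g ((0 : EuclideanSpace ℝ (Fin d)), m₁) p)
      (Metric.closedBall (0 : EuclideanSpace ℝ (Fin d)) r ×ˢ (Set.univ : Set M))
      ((volume : Measure (EuclideanSpace ℝ (Fin d))).prod ν))
    (hIntC : IntegrableOn (fun m₁ =>
      ∫ p in Metric.closedBall (0 : EuclideanSpace ℝ (Fin d)) r ×ˢ C,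
        g ((0 : EuclideanSpace ℝ (Fin d)), m₁) p
          ∂((volume : Measure (EuclideanSpace ℝ (Fin d))).prod ν)) C ν) :
    (∀ (z : EuclideanSpace ℝ (Fin d)) m₁ m₂, m₁ ∈ C → m₂ ∈ Cᶜ →
        g ((0 : EuclideanSpace ℝ (Fin d)), m₁) (z, m₂) = 1) ∧
    (1 / ((ν C).toReal * (ν (Set.univ : Set M)).toReal)) *
        ∫ m₁ in C,
          (∫ p in Metric.closedBall (0 : EuclideanSpace ℝ (Fin d)) r ×ˢ (Set.univ : Set M),
            g ((0 : EuclideanSpace ℝ (Fin d)), m₁) p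
              ∂((volume : Measure (EuclideanSpace ℝ (Fin d))).prod ν)) ∂ν =
      ((ν Cᶜ).toReal / (ν (Set.univ : Set M)).toReal) *
          (volume (Metric.closedBall (0 : EuclideanSpace ℝ (Fin d)) r)).toReal +
        ((ν C).toReal / (ν (Set.univ : Set M)).toReal) *
          ((1 / ((ν C).toReal * (ν C).toReal)) *
            ∫ m₁ in C,
              (∫ p in Metric.closedBall (0 : EuclideanSpace ℝ (Fin d)) r ×ˢ C,
                g ((0 : EuclideanSpace ℝ (Fin d)), m₁) p
                  ∂((volume : Measure (EuclideanSpace ℝ (Fin d))).prod ν)) ∂ν) :=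
  stmt_11_general ν ρ2 lam hlam g hg C hCm hC hFact r hInt hIntC
end
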